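/- arXiv:1911.00659 — 4 statements merged into one kernel-verified Lean document; each statement's English description precedes it below -/
import Mathlib

section
/- Let W be a symmetric 2×2×2 real tensor with W₂₂₂ ≠ 0, and let T(x) be the tensor obtained by rotating W through the angle arctan(x). If the function τ(x) = T₁₁₁(x)² attains its maximum over the extended real line at x = 0, then W₁₁₁ ≠ 0 and W₁₁₂ = 0. -/
open Real

theorem stmt_6 (W111 W112 W122 W222 : ℝ) (hW : W222 ≠ 0)
    (T111 : ℝ → ℝ)
    (hT111 : ∀ x, T111 x = (cos (arctan x))^3 * W111
        + 3 * (cos (arctan x))^2 * sin (arctan x) * W112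
        + 3 * cos (arctan x) * (sin (arctan x))^2 * W122
        + (sin (arctan x))^3 * W222)
    (τ : ℝ → ℝ) (hτ : ∀ x, τ x = (T111 x)^2)
    (hmax : ∀ x, τ x ≤ τ 0) (hmaxInf : W222^2 ≤ τ 0) :
    W111 ≠ 0 ∧ W112 = 0 := by
  have hτ0 : τ 0 = W111^2 := by
    rw [hτ, hT111]; simp
  have hW111 : W111 ≠ 0 := by
    intro h
    rw [hτ0, h] at hmaxInf
    nlinarith [sq_nonneg W222, pow_pos (abs_pos.mpr hW) 2, sq_abs W222]
  refine ⟨hW111, ?_⟩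
  -- Key polynomial inequality
  have key : ∀ x : ℝ, (W111 + 3*x*W112 + 3*x^2*W122 + x^3*W222)^2
      ≤ W111^2 * (1 + x^2)^3 := by
    intro x
    have h1 := hmax x
    rw [hτ, hτ, hT111, hT111, Real.cos_arctan, Real.sin_arctan] at h1
    simp only [Real.cos_arctan, Real.sin_arctan] at h1
    have hx : (0:ℝ) < 1 + x^2 := by positivity
    have hs : Real.sqrt (1 + x^2) ^ 2 = 1 + x^2 := Real.sq_sqrt hx.le
    have hsp : 0 < Real.sqrt (1 + x^2) := Real.sqrt_pos.mpr hx
    set s := Real.sqrt (1 + x^2) with hsdef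
    have hs0 : s ≠ 0 := hsp.ne'
    have e1 : (1/s)^3 * W111 + 3*(1/s)^2*(x/s)*W112 + 3*(1/s)*(x/s)^2*W122
        + (x/s)^3*W222 = (W111 + 3*x*W112 + 3*x^2*W122 + x^3*W222) / s^3 := by
      field_simp
    rw [e1] at h1
    norm_num at h1
    have h2 : (W111 + 3*x*W112 + 3*x^2*W122 + x^3*W222)^2 ≤ W111^2 * (s^3)^2 := by
      rw [div_pow, div_le_iff₀ (by positivity)] at h1
      linarith
    calc (W111 + 3*x*W112 + 3*x^2*W122 + x^3*W222)^2
        ≤ W111^2 * (s^3)^2 := h2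
      _ = W111^2 * (1 + x^2)^3 := by rw [← pow_mul, pow_mul', hs]
  set f : ℝ → ℝ := fun x => W111^2 * (1 + x^2)^3
      - (W111 + 3*x*W112 + 3*x^2*W122 + x^3*W222)^2 with hf
  have hmin : IsLocalMin f 0 := by
    apply Filter.Eventually.of_forall
    intro x
    have := key x
    simp only [hf]
    norm_num
    nlinarith [key x]
  have hu : HasDerivAt (fun x : ℝ => 1 + x^2) 0 0 := by
    simpa using ((hasDerivAt_pow 2 (0:ℝ)).const_add 1)
  have hu3 : HasDerivAt (fun x : ℝ => (1 + x^2)^3) 0 0 := by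
    simpa using hu.fun_pow 3
  have hv : HasDerivAt (fun x : ℝ => W111 + 3*x*W112 + 3*x^2*W122 + x^3*W222)
      (3*W112) 0 := by
    have h1 : HasDerivAt (fun x : ℝ => 3*x*W112) (3*W112) 0 := by
      simpa using (((hasDerivAt_id (0:ℝ)).const_mul 3).mul_const W112)
    have h2 : HasDerivAt (fun x : ℝ => 3*x^2*W122) 0 0 := by
      simpa using (((hasDerivAt_pow 2 (0:ℝ)).const_mul 3).mul_const W122)
    have h3 : HasDerivAt (fun x : ℝ => x^3*W222) 0 0 := by
      simpa using ((hasDerivAt_pow 3 (0:ℝ)).mul_const W222)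
    have := ((h1.const_add W111).fun_add h2).fun_add h3
    simpa using this
  have hv2 : HasDerivAt (fun x : ℝ => (W111 + 3*x*W112 + 3*x^2*W122 + x^3*W222)^2)
      (6*W111*W112) 0 := by
    have := hv.fun_pow 2
    norm_num at this
    rw [show (6*W111*W112) = 2 * W111 * (3 * W112) by ring]
    exact this
  have hfd : HasDerivAt f (-(6*W111*W112)) 0 := by
    have := (hu3.const_mul (W111^2)).fun_sub hv2
    simpa using this
  have hder : deriv f 0 = 0 := hmin.deriv_eq_zero
  rw [hfd.deriv] at hder
  have : W111 * W112 = 0 := by linarith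
  rcases mul_eq_zero.mp this with h | h
  · exact absurd h hW111
  · exact h
end

section
/- Let W be a symmetric 2×2×2 real tensor with W₂₂₂ ≠ 0, and let T(x) be the rotation of W by angle arctan(x). If τ(x) = T₁₁₁(x)² attains its maximum over the extended reals at x = 0, then W₁₁₁(2W₁₂₂ - W₁₁₁) < 0. -/
/-!
Write `P(x) = W₁₁₁ + 3W₁₁₂x + 3W₁₂₂x² + W₂₂₂x³`, so that `T₁₁₁(x)² = P(x)² / (1 + x²)³`.
Maximality at `0` says `D(x) = W₁₁₁²(1 + x²)³ - P(x)² ≥ 0` with `D(0) = 0`; the even part of `D`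
is `t²(3(W₁₁₁² - 3W₁₁₂² - 2W₁₁₁W₁₂₂) + O(t²))`, whence the second-order condition
`3W₁₁₂² + 2W₁₁₁W₁₂₂ ≤ W₁₁₁²`. If `W₁₁₁(2W₁₂₂ - W₁₁₁) ≥ 0` this forces `W₁₁₂ = 0` and
`W₁₂₂ = W₁₁₁/2`. But then, with `x = 2W₂₂₂/W₁₁₁`, `P(x) = W₁₁₁(1 + x²)(2 + x²)/2`, and
`P(x)² - W₁₁₁²(1 + x²)³ = W₁₁₁²(1 + x²)²x⁴/4 > 0`, contradicting maximality.
-/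

open Real Filter Topology

/-- `W(v, v, v)` for `v = (1, x)`, the `P(x)` above. -/
def symCubic (a b c e x : ℝ) : ℝ := a + 3 * b * x + 3 * c * x ^ 2 + e * x ^ 3

lemma rotatedEntry_sq_mul (a b c e x : ℝ) :
    ((cos (arctan x)) ^ 3 * a + 3 * (cos (arctan x)) ^ 2 * sin (arctan x) * b
        + 3 * cos (arctan x) * (sin (arctan x)) ^ 2 * c + (sin (arctan x)) ^ 3 * e) ^ 2
      * (1 + x ^ 2) ^ 3 = symCubic a b c e x ^ 2 := by
  have hsin : sin (arctan x) = x * cos (arctan x) := by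
    rw [sin_arctan, cos_arctan]; ring
  have hcos : cos (arctan x) ^ 2 * (1 + x ^ 2) = 1 := by
    rw [cos_arctan, div_pow, sq_sqrt (by positivity)]; field_simp
  calc _ = (cos (arctan x) ^ 2 * (1 + x ^ 2)) ^ 3 * symCubic a b c e x ^ 2 := by
        rw [hsin, symCubic]; ring
    _ = symCubic a b c e x ^ 2 := by rw [hcos]; ring

lemma nonneg_of_forall_ne_nonneg {g : ℝ → ℝ} {x₀ : ℝ} (hg : ContinuousAt g x₀)
    (h : ∀ x ≠ x₀, 0 ≤ g x) : 0 ≤ g x₀ :=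
  ge_of_tendsto (hg.tendsto.mono_left nhdsWithin_le_nhds) (eventually_nhdsWithin_of_forall (s := {x₀}ᶜ) h)

lemma sq_add_mul_le_of_symCubic_sq_le {a b c e : ℝ}
    (h : ∀ x, symCubic a b c e x ^ 2 ≤ a ^ 2 * (1 + x ^ 2) ^ 3) :
    3 * b ^ 2 + 2 * a * c ≤ a ^ 2 := by
  set g : ℝ → ℝ := fun t ↦ 3 * (a ^ 2 - 3 * b ^ 2 - 2 * a * c)
    + 3 * (a ^ 2 - 3 * c ^ 2 - 2 * b * e) * t ^ 2 + (a ^ 2 - e ^ 2) * t ^ 4 with hg_def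
  have hg : ∀ t ≠ 0, 0 ≤ g t := by
    intro t ht
    have heven : 2 * t ^ 2 * g t
        = (a ^ 2 * (1 + t ^ 2) ^ 3 - symCubic a b c e t ^ 2)
          + (a ^ 2 * (1 + (-t) ^ 2) ^ 3 - symCubic a b c e (-t) ^ 2) := by
      simp only [hg_def, symCubic]; ring
    have hpos : 0 < 2 * t ^ 2 := by positivity
    refine nonneg_of_mul_nonneg_right ?_ hpos
    linarith [h t, h (-t)]
  have hg0 := nonneg_of_forall_ne_nonneg (by fun_prop) hg
  simp only [hg_def] at hg0
  linarith

lemma sq_mul_lt_symCubic_sq {a x : ℝ} (ha : a ≠ 0) (hx : x ≠ 0) :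
    a ^ 2 * (1 + x ^ 2) ^ 3 < symCubic a 0 (a / 2) (a * x / 2) x ^ 2 := by
  have hfactor : symCubic a 0 (a / 2) (a * x / 2) x = a * (1 + x ^ 2) * (2 + x ^ 2) / 2 := by
    rw [symCubic]; ring
  have hgap : 0 < a ^ 2 * (1 + x ^ 2) ^ 2 * x ^ 4 / 4 := by positivity
  rw [hfactor]
  linarith [show (a * (1 + x ^ 2) * (2 + x ^ 2) / 2) ^ 2
    = a ^ 2 * (1 + x ^ 2) ^ 3 + a ^ 2 * (1 + x ^ 2) ^ 2 * x ^ 4 / 4 by ring]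

theorem stmt_7 (W111 W112 W122 W222 : ℝ) (hW : W222 ≠ 0)
    (T111 : ℝ → ℝ)
    (hT111 : ∀ x, T111 x = (cos (arctan x))^3 * W111
        + 3 * (cos (arctan x))^2 * sin (arctan x) * W112
        + 3 * cos (arctan x) * (sin (arctan x))^2 * W122
        + (sin (arctan x))^3 * W222)
    (τ : ℝ → ℝ) (hτ : ∀ x, τ x = (T111 x)^2)
    (hmax : ∀ x, τ x ≤ τ 0) (hmaxInf : W222^2 ≤ τ 0) :
    W111 * (2 * W122 - W111) < 0 := by
  have hτ0 : τ 0 = W111 ^ 2 := by simp [hτ, hT111]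
  have hbound (x : ℝ) : symCubic W111 W112 W122 W222 x ^ 2 ≤ W111 ^ 2 * (1 + x ^ 2) ^ 3 := by
    rw [← rotatedEntry_sq_mul, ← hT111, ← hτ, ← hτ0]
    exact mul_le_mul_of_nonneg_right (hmax x) (by positivity)
  have ha : W111 ≠ 0 := by
    rintro rfl
    exact hW (pow_eq_zero_iff two_ne_zero |>.mp (le_antisymm (by simpa [hτ0] using hmaxInf)
      (sq_nonneg _)))
  by_contra! hneg
  have hsecond := sq_add_mul_le_of_symCubic_sq_le hbound
  obtain rfl : W112 = 0 := by nlinarith [sq_nonneg W112]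
  obtain rfl : W122 = W111 / 2 := by
    refine mul_left_cancel₀ ha ?_
    nlinarith
  have hx : 2 * W222 / W111 ≠ 0 := by positivity
  have hW222 : W222 = W111 * (2 * W222 / W111) / 2 := by field_simp
  have hlt := sq_mul_lt_symCubic_sq ha hx
  rw [← hW222] at hlt
  exact (hbound _).not_gt hlt
end

section
/- Let W be a symmetric 3×3×3 real tensor, x a nonzero real number, and T the tensor obtained by applying the Givens rotation G^{(1,3)}(arctan x) to each mode of W. If W₂₂₃ = 0 and T₂₂₃ = 0, then W₁₂₂ = 0; more precisely, T₂₂₃ = -(x/√(1+x²)) W₁₂₂ + (1/√(1+x²)) W₂₂₃. -/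
open Real

section TensorTransform

variable {ι : Type*} [Fintype ι] [DecidableEq ι]

theorem sum_mul_mul_mul_of_col_eq_single (W : ι → ι → ι → ℝ) (G : Matrix ι ι ℝ)
    {j : ι} (hcol : ∀ a, G a j = if a = j then 1 else 0) (k : ι) :
    ∑ a, ∑ b, ∑ c, W a b c * G a j * G b j * G c k = ∑ c, W j j c * G c k := by
  simp [hcol]

end TensorTransform

theorem apply_one_one_zero_eq_of_symm {W : Fin 3 → Fin 3 → Fin 3 → ℝ}
    (hsymm : ∀ a b c, W a b c = W b a c ∧ W a b c = W a c b) : W 1 1 0 = W 0 1 1 := by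
  rw [(hsymm 1 1 0).2, (hsymm 1 0 1).1]

theorem givens13_transform_apply_112 (W : Fin 3 → Fin 3 → Fin 3 → ℝ) (c s : ℝ) :
    ∑ a, ∑ b, ∑ k, W a b k * !![c, 0, -s; 0, 1, 0; s, 0, c] a 1
      * !![c, 0, -s; 0, 1, 0; s, 0, c] b 1 * !![c, 0, -s; 0, 1, 0; s, 0, c] k 2
      = -s * W 1 1 0 + c * W 1 1 2 := by
  rw [sum_mul_mul_mul_of_col_eq_single]
  · simp only [Fin.isValue, Matrix.of_apply, Matrix.cons_val', Matrix.cons_val,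
      Matrix.cons_val_fin_one, Fin.sum_univ_three, Matrix.cons_val_zero, Matrix.cons_val_one]
    ring
  · intro a
    fin_cases a <;> rfl

theorem stmt_9 (W : Fin 3 → Fin 3 → Fin 3 → ℝ)
    (hsymm : ∀ a b c, W a b c = W b a c ∧ W a b c = W a c b)
    (x : ℝ) (hx : x ≠ 0)
    (G : Matrix (Fin 3) (Fin 3) ℝ)
    (hG : G = !![cos (arctan x), 0, -sin (arctan x); 0, 1, 0;
                 sin (arctan x), 0, cos (arctan x)])
    (T : Fin 3 → Fin 3 → Fin 3 → ℝ)
    (hT : ∀ i j k, T i j k = ∑ a : Fin 3, ∑ b : Fin 3, ∑ c : Fin 3,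
        W a b c * G a i * G b j * G c k) :
    T 1 1 2 = -(x / Real.sqrt (1 + x^2)) * W 0 1 1 + (1 / Real.sqrt (1 + x^2)) * W 1 1 2
    ∧ (W 1 1 2 = 0 → T 1 1 2 = 0 → W 0 1 1 = 0) := by
  have hT112 : T 1 1 2 = -(x / Real.sqrt (1 + x^2)) * W 0 1 1
      + (1 / Real.sqrt (1 + x^2)) * W 1 1 2 := by
    rw [hT, hG, givens13_transform_apply_112, apply_one_one_zero_eq_of_symm hsymm,
      cos_arctan, sin_arctan]
  refine ⟨hT112, fun hW hT0 => ?_⟩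
  have hsin : x / Real.sqrt (1 + x^2) ≠ 0 := div_ne_zero hx (Real.sqrt_pos.2 (by positivity)).ne'
  rw [hT112, hW, mul_zero, add_zero, neg_mul, neg_eq_zero] at hT0
  exact (mul_eq_zero.1 hT0).resolve_left hsin
end

section
/- Let W be a symmetric 3×3×3 real tensor, x ∈ ℝ with x ≠ 0, and T = W rotated by the Givens rotation G^{(1,3)}(arctan x) on all three modes. If |W₁₁₁| = |T₁₁₁| > 0, W₁₁₁W₁₁₂ = W₁₂₂W₂₂₂, T₁₁₁T₁₁₂ = T₁₂₂T₂₂₂, and W₁₁₃ = W₂₂₃ = T₁₁₃ = T₂₂₃ = 0, then W₁₁₂ = W₁₂₂ = T₁₁₂ = T₁₂₂ = 0. -/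
open Real

/-!
The rotation fixes the second axis, so an entry of `T` with two indices equal to 2 only involves
entries of `W` of the same kind: `T₂₂₃ = W₂₂₃ cos θ - W₁₂₂ sin θ` and
`T₁₂₂ = W₁₂₂ cos θ + W₂₂₃ sin θ` for `θ = arctan x`, where `sin θ ≠ 0`. Hence `W₂₂₃ = T₂₂₃ = 0`
forces `W₁₂₂ = 0` and then `T₁₂₂ = 0`, and the two product relations with `W₁₁₁, T₁₁₁ ≠ 0` give
`W₁₁₂ = T₁₁₂ = 0`. (Indices are 1-based here, 0-based in the code.)
-/

noncomputable def givens13 (θ : ℝ) : Matrix (Fin 3) (Fin 3) ℝ :=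
  !![cos θ, 0, -sin θ; 0, 1, 0; sin θ, 0, cos θ]

lemma givens13_transform_one_one_two (W : Fin 3 → Fin 3 → Fin 3 → ℝ) (θ : ℝ) :
    ∑ a : Fin 3, ∑ b : Fin 3, ∑ c : Fin 3,
      W a b c * givens13 θ a 1 * givens13 θ b 1 * givens13 θ c 2 =
      W 1 1 2 * cos θ - W 1 1 0 * sin θ := by
  simp [givens13, Fin.sum_univ_three, sub_eq_add_neg, add_comm]

lemma givens13_transform_zero_one_one (W : Fin 3 → Fin 3 → Fin 3 → ℝ) (θ : ℝ) :
    ∑ a : Fin 3, ∑ b : Fin 3, ∑ c : Fin 3,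
      W a b c * givens13 θ a 0 * givens13 θ b 1 * givens13 θ c 1 =
      W 0 1 1 * cos θ + W 2 1 1 * sin θ := by
  simp [givens13, Fin.sum_univ_three]

lemma symm_tensor_swap_outer {α ι : Type*} {W : ι → ι → ι → α}
    (hsymm : ∀ a b c, W a b c = W b a c ∧ W a b c = W a c b) (a b c : ι) :
    W a b c = W c b a := by
  rw [(hsymm a b c).1, (hsymm b a c).2, (hsymm b c a).1]

theorem stmt_10 (W : Fin 3 → Fin 3 → Fin 3 → ℝ)
    (hsymm : ∀ a b c, W a b c = W b a c ∧ W a b c = W a c b)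
    (x : ℝ) (hx : x ≠ 0)
    (G : Matrix (Fin 3) (Fin 3) ℝ)
    (hG : G = !![cos (arctan x), 0, -sin (arctan x); 0, 1, 0;
                 sin (arctan x), 0, cos (arctan x)])
    (T : Fin 3 → Fin 3 → Fin 3 → ℝ)
    (hT : ∀ i j k, T i j k = ∑ a : Fin 3, ∑ b : Fin 3, ∑ c : Fin 3,
        W a b c * G a i * G b j * G c k)
    (habs : |W 0 0 0| = |T 0 0 0|) (hpos : 0 < |W 0 0 0|)
    (hW12 : W 0 0 0 * W 0 0 1 = W 0 1 1 * W 1 1 1)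
    (hT12 : T 0 0 0 * T 0 0 1 = T 0 1 1 * T 1 1 1)
    (hz : W 0 0 2 = 0 ∧ W 1 1 2 = 0 ∧ T 0 0 2 = 0 ∧ T 1 1 2 = 0) :
    W 0 0 1 = 0 ∧ W 0 1 1 = 0 ∧ T 0 0 1 = 0 ∧ T 0 1 1 = 0 := by
  obtain ⟨-, hW112, -, hT112⟩ := hz
  obtain rfl : G = givens13 (arctan x) := hG
  have hs : sin (arctan x) ≠ 0 := sin_arctan_eq_zero.not.mpr hx
  have hW000 : W 0 0 0 ≠ 0 := abs_pos.mp hpos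
  have hT000 : T 0 0 0 ≠ 0 := abs_pos.mp (habs ▸ hpos)
  have hW011 : W 0 1 1 = 0 := by
    have h := (hT 1 1 2).trans (givens13_transform_one_one_two W _)
    rw [hT112, hW112, symm_tensor_swap_outer hsymm 1 1 0] at h
    simpa [hs] using h
  have hT011 : T 0 1 1 = 0 := by
    rw [hT 0 1 1, givens13_transform_zero_one_one, symm_tensor_swap_outer hsymm 2 1 1, hW011,
      hW112]
    ring
  have hW001 : W 0 0 1 = 0 := by simpa [hW011, hW000] using hW12
  have hT001 : T 0 0 1 = 0 := by simpa [hT011, hT000] using hT12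
  exact ⟨hW001, hW011, hT001, hT011⟩
end
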